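/- The kernel of the Lindblad generator ℒ acting on 3×3 complex matrices has complex dimension 4. -/

import Mathlib

/-!
Written out entrywise, ℒ multiplies each coherence ρ₀₁, ρ₁₀, ρ₁₂, ρ₂₁ by -(γ₁ + γ₂)/2 and the
excited population ρ₁₁ by -(γ₁ + γ₂), feeding it into ρ₀₀ and ρ₂₂, while it annihilates the four
entries indexed by the ground states {0, 2}. Hence ℒ ρ = 0 exactly when the five entries in row
and column 1 vanish, a subspace of dimension 9 - 5 = 4.
-/

open Matrix

noncomputable def E1 : Matrix (Fin 3) (Fin 3) ℂ := Matrix.single 0 1 1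
noncomputable def E2 : Matrix (Fin 3) (Fin 3) ℂ := Matrix.single 2 1 1

/-- The Lindblad generator of laser cooling. -/
noncomputable def lind (γ₁ γ₂ : ℝ) (ρ : Matrix (Fin 3) (Fin 3) ℂ) :
    Matrix (Fin 3) (Fin 3) ℂ :=
  (γ₁ : ℂ) • (E1 * ρ * E1ᴴ - (1/2 : ℂ) • (E1ᴴ * E1 * ρ + ρ * (E1ᴴ * E1)))
    + (γ₂ : ℂ) • (E2 * ρ * E2ᴴ - (1/2 : ℂ) • (E2ᴴ * E2 * ρ + ρ * (E2ᴴ * E2)))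

namespace Matrix

variable {m n R : Type*} [Semiring R]

def restrictEntries (s : Finset (m × n)) : Matrix m n R →ₗ[R] (s → R) where
  toFun A p := A p.1.1 p.1.2
  map_add' _ _ := rfl
  map_smul' _ _ := rfl

@[simp]
theorem restrictEntries_apply (s : Finset (m × n)) (A : Matrix m n R) (p : s) :
    restrictEntries s A p = A p.1.1 p.1.2 :=
  rfl

theorem mem_ker_restrictEntries {s : Finset (m × n)} {A : Matrix m n R} :
    A ∈ LinearMap.ker (restrictEntries s) ↔ ∀ p ∈ s, A p.1 p.2 = 0 := by
  simp [funext_iff]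

theorem restrictEntries_surjective (s : Finset (m × n)) :
    Function.Surjective (restrictEntries (R := R) s) := by
  classical
  intro g
  refine ⟨of fun i j => if h : (i, j) ∈ s then g ⟨(i, j), h⟩ else 0, funext fun p => ?_⟩
  simp [p.2]

theorem finrank_ker_restrictEntries {R : Type*} [DivisionRing R] [Fintype m] [Fintype n]
    (s : Finset (m × n)) :
    Module.finrank R (LinearMap.ker (restrictEntries (R := R) s)) =
      Fintype.card m * Fintype.card n - s.card := by
  have := (restrictEntries (R := R) s).finrank_range_add_finrank_ker
  rw [LinearMap.range_eq_top.mpr (restrictEntries_surjective s), finrank_top,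
    Module.finrank_fintype_fun_eq_card, Fintype.card_coe, Module.finrank_matrix,
    Module.finrank_self, mul_one] at this
  omega

end Matrix

lemma lind_eq (γ₁ γ₂ : ℝ) (ρ : Matrix (Fin 3) (Fin 3) ℂ) :
    lind γ₁ γ₂ ρ = Matrix.of
      ![![(γ₁ : ℂ) * ρ 1 1, -((γ₁ : ℂ) + γ₂)/2 * ρ 0 1, 0],
        ![-((γ₁ : ℂ) + γ₂)/2 * ρ 1 0, -((γ₁ : ℂ) + γ₂) * ρ 1 1, -((γ₁ : ℂ) + γ₂)/2 * ρ 1 2],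
        ![0, -((γ₁ : ℂ) + γ₂)/2 * ρ 2 1, (γ₂ : ℂ) * ρ 1 1]] := by
  ext i j
  fin_cases i <;> fin_cases j <;>
    (simp [lind, E1, E2, Matrix.mul_apply, Fin.sum_univ_three, Matrix.single,
      conjTranspose_apply]; try ring)

theorem lind_eq_zero_iff {γ₁ γ₂ : ℝ} (hγ : (γ₁ : ℂ) + γ₂ ≠ 0) {ρ : Matrix (Fin 3) (Fin 3) ℂ} :
    lind γ₁ γ₂ ρ = 0 ↔ ∀ i j, (i = 1 ∨ j = 1) → ρ i j = 0 := by
  have hγ' : -(γ₂ : ℂ) + -γ₁ ≠ 0 := by rwa [← neg_add, neg_ne_zero, add_comm]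
  rw [lind_eq, ← Matrix.ext_iff]
  simp [Fin.forall_fin_succ, hγ']
  tauto

theorem stmt15 (γ₁ γ₂ : ℝ) (h₁ : 0 < γ₁) (h₂ : 0 < γ₂)
    (Lop : Matrix (Fin 3) (Fin 3) ℂ →ₗ[ℂ] Matrix (Fin 3) (Fin 3) ℂ)
    (hLop : ∀ ρ, Lop ρ = lind γ₁ γ₂ ρ) :
    Module.finrank ℂ (LinearMap.ker Lop) = 4 := by
  have hγ : (γ₁ : ℂ) + γ₂ ≠ 0 := by exact_mod_cast (add_pos h₁ h₂).ne'
  have hker : LinearMap.ker Lop =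
      LinearMap.ker (restrictEntries (R := ℂ) {p : Fin 3 × Fin 3 | p.1 = 1 ∨ p.2 = 1}) := by
    ext ρ
    rw [mem_ker_restrictEntries, LinearMap.mem_ker, hLop, lind_eq_zero_iff hγ]
    simp
  rw [hker, finrank_ker_restrictEntries]
  rfl
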